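/- arXiv:2102.03806 — 4 statements merged into one kernel-verified Lean document; each statement's English description precedes it below -/
import Mathlib

section
/- Conversely, if J is an orthogonal complex structure on a 4-dimensional oriented real inner product space V (J² = −Id, J orthogonal), then the 2-vector σ ∈ Λ²V dual to one half of the Kähler 2-form of J, i.e. the unique σ with 2g(σ, X∧Y) = g(JX, Y), has unit length and lies in Λ²₊V or Λ²₋V. -/
open scoped RealInnerProductSpace

set_option maxHeartbeats 2000000

/-- If `J` is an orthogonal complex structure on the 4-dimensional
oriented inner product space `V`, then the 2-vector `σ ∈ Λ²V` dual to one half of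
the Kähler 2-form of `J` (i.e. `2 g(σ, X∧Y) = g(JX, Y)`) has unit length and lies
in `Λ²₊V` or in `Λ²₋V` (the spans of the canonical frames `s^±`). -/
theorem stmt6
    {V W : Type*} [NormedAddCommGroup V] [InnerProductSpace ℝ V]
    [NormedAddCommGroup W] [InnerProductSpace ℝ W]
    (wedge : V →ₗ[ℝ] V →ₗ[ℝ] W)
    (halt : ∀ X : V, wedge X X = 0)
    (hg : ∀ v1 v2 v3 v4 : V, ⟪wedge v1 v2, wedge v3 v4⟫ =
      (1/2) * (⟪v1, v3⟫ * ⟪v2, v4⟫ - ⟪v1, v4⟫ * ⟪v2, v3⟫))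
    (hspan : Submodule.span ℝ (Set.range fun p : V × V => wedge p.1 p.2) = ⊤)
    (E : Fin 4 → V) (hE : Orthonormal ℝ E)
    (hbasis : Submodule.span ℝ (Set.range E) = ⊤)
    (sp sm : Fin 3 → W)
    (hsp0 : sp 0 = wedge (E 0) (E 1) + wedge (E 2) (E 3))
    (hsp1 : sp 1 = wedge (E 0) (E 2) + wedge (E 3) (E 1))
    (hsp2 : sp 2 = wedge (E 0) (E 3) + wedge (E 1) (E 2))
    (hsm0 : sm 0 = wedge (E 0) (E 1) - wedge (E 2) (E 3))
    (hsm1 : sm 1 = wedge (E 0) (E 2) - wedge (E 3) (E 1))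
    (hsm2 : sm 2 = wedge (E 0) (E 3) - wedge (E 1) (E 2))
    (J : V →ₗ[ℝ] V)
    (hJ2 : ∀ X : V, J (J X) = -X)
    (hJorth : ∀ X Y : V, ⟪J X, J Y⟫ = ⟪X, Y⟫)
    (σ : W)
    (hσ : ∀ X Y : V, 2 * ⟪σ, wedge X Y⟫ = ⟪J X, Y⟫) :
    ‖σ‖ = 1 ∧
    (σ ∈ Submodule.span ℝ (Set.range sp) ∨ σ ∈ Submodule.span ℝ (Set.range sm)) := by
  classical
  have F0 : ∀ (h : 0 < 4), (⟨0, h⟩ : Fin 4) = 0 := fun _ => rfl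
  have F1 : ∀ (h : 1 < 4), (⟨1, h⟩ : Fin 4) = 1 := fun _ => rfl
  have F2 : ∀ (h : 2 < 4), (⟨2, h⟩ : Fin 4) = 2 := fun _ => rfl
  have F3 : ∀ (h : 3 < 4), (⟨3, h⟩ : Fin 4) = 3 := fun _ => rfl
  have hEij : ∀ i j : Fin 4, ⟪E i, E j⟫ = if i = j then 1 else 0 :=
    orthonormal_iff_ite.mp hE
  -- a vector with zero inner products against the basis is zero
  have detV : ∀ v : V, (∀ i, ⟪E i, v⟫ = 0) → v = 0 := by
    intro v hv
    have h : ∀ x ∈ Submodule.span ℝ (Set.range E), ⟪x, v⟫ = 0 := by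
      intro x hx
      induction hx using Submodule.span_induction with
      | mem x hx => obtain ⟨i, rfl⟩ := hx; exact hv i
      | zero => simp
      | add x y _ _ h1 h2 => rw [inner_add_left, h1, h2]; ring
      | smul t x _ h1 => rw [real_inner_smul_left, h1]; ring
    exact inner_self_eq_zero.mp (h v (by rw [hbasis]; trivial))
  -- a 2-vector orthogonal to all wedges is zero
  have detW : ∀ u : W, (∀ X Y : V, ⟪wedge X Y, u⟫ = 0) → u = 0 := by
    intro u hu
    have h : ∀ x ∈ Submodule.span ℝ (Set.range fun p : V × V => wedge p.1 p.2),
        ⟪x, u⟫ = 0 := by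
      intro x hx
      induction hx using Submodule.span_induction with
      | mem x hx => obtain ⟨⟨X, Y⟩, rfl⟩ := hx; exact hu X Y
      | zero => simp
      | add x y _ _ h1 h2 => rw [inner_add_left, h1, h2]; ring
      | smul t x _ h1 => rw [real_inner_smul_left, h1]; ring
    exact inner_self_eq_zero.mp (h u (by rw [hspan]; trivial))
  -- antisymmetry of the wedge
  have hanti : ∀ X Y : V, wedge Y X = - wedge X Y := by
    intro X Y
    have h := halt (X + Y)
    simp only [map_add, LinearMap.add_apply, halt X, halt Y, zero_add, add_zero] at h
    exact eq_neg_of_add_eq_zero_left h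
  -- J is skew-adjoint
  have hskew : ∀ X Y : V, ⟪J Y, X⟫ = -⟪J X, Y⟫ := by
    intro X Y
    have h := hJorth X (J Y)
    rw [hJ2, inner_neg_right] at h
    have hcomm := real_inner_comm X (J Y)
    linarith
  have hdiag : ∀ X : V, ⟪J X, X⟫ = 0 := by
    intro X; have := hskew X X; linarith
  -- orthonormal expansion
  have hexp : ∀ v : V, v = ∑ j, ⟪E j, v⟫ • E j := by
    intro v
    have hz : ∀ k, ⟪E k, v - ∑ j, ⟪E j, v⟫ • E j⟫ = 0 := by
      intro k
      have hterm : ∀ j, ⟪E k, ⟪E j, v⟫ • E j⟫ = if k = j then ⟪E j, v⟫ else 0 := by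
        intro j; rw [real_inner_smul_right, hEij]; split <;> ring
      rw [inner_sub_right, inner_sum]
      simp only [hterm, Finset.sum_ite_eq, Finset.mem_univ, if_true]
      ring
    have := detV _ hz
    rw [sub_eq_zero] at this
    exact this
  -- the fundamental quadratic relations
  have hsum : ∀ i l : Fin 4,
      ∑ j, ⟪J (E i), E j⟫ * ⟪J (E j), E l⟫ = if i = l then -1 else 0 := by
    intro i l
    have h2 : J (J (E i)) = ∑ j, ⟪E j, J (E i)⟫ • J (E j) := by
      conv_lhs => rw [hexp (J (E i))]
      rw [map_sum]
      simp only [map_smul]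
    have h3 : ⟪J (J (E i)), E l⟫ = ∑ j, ⟪E j, J (E i)⟫ * ⟪J (E j), E l⟫ := by
      rw [h2, sum_inner]
      simp only [real_inner_smul_left]
    rw [hJ2 (E i), inner_neg_left, hEij] at h3
    have hc : ∀ j, ⟪E j, J (E i)⟫ = ⟪J (E i), E j⟫ := fun j => real_inner_comm _ _
    simp only [hc] at h3
    rw [← h3]
    split <;> norm_num
  -- name the six matrix entries
  obtain ⟨a, ha⟩ : ∃ x : ℝ, ⟪J (E 0), E 1⟫ = x := ⟨_, rfl⟩
  obtain ⟨b, hb⟩ : ∃ x : ℝ, ⟪J (E 0), E 2⟫ = x := ⟨_, rfl⟩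
  obtain ⟨c, hc⟩ : ∃ x : ℝ, ⟪J (E 0), E 3⟫ = x := ⟨_, rfl⟩
  obtain ⟨p, hp⟩ : ∃ x : ℝ, ⟪J (E 1), E 2⟫ = x := ⟨_, rfl⟩
  obtain ⟨q, hq⟩ : ∃ x : ℝ, ⟪J (E 1), E 3⟫ = x := ⟨_, rfl⟩
  obtain ⟨r, hr⟩ : ∃ x : ℝ, ⟪J (E 2), E 3⟫ = x := ⟨_, rfl⟩
  have k10 : ⟪J (E 1), E 0⟫ = -a := (hskew (E 0) (E 1)).trans (by rw [ha])
  have k20 : ⟪J (E 2), E 0⟫ = -b := (hskew (E 0) (E 2)).trans (by rw [hb])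
  have k30 : ⟪J (E 3), E 0⟫ = -c := (hskew (E 0) (E 3)).trans (by rw [hc])
  have k21 : ⟪J (E 2), E 1⟫ = -p := (hskew (E 1) (E 2)).trans (by rw [hp])
  have k31 : ⟪J (E 3), E 1⟫ = -q := (hskew (E 1) (E 3)).trans (by rw [hq])
  have k32 : ⟪J (E 3), E 2⟫ = -r := (hskew (E 2) (E 3)).trans (by rw [hr])
  have k00 : ⟪J (E 0), E 0⟫ = 0 := hdiag (E 0)
  have k11 : ⟪J (E 1), E 1⟫ = 0 := hdiag (E 1)
  have k22 : ⟪J (E 2), E 2⟫ = 0 := hdiag (E 2)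
  have k33 : ⟪J (E 3), E 3⟫ = 0 := hdiag (E 3)
  -- extract the scalar equations
  have q00 := hsum 0 0
  have q11 := hsum 1 1
  have q22 := hsum 2 2
  have q33 := hsum 3 3
  have q01 := hsum 0 1
  have q02 := hsum 0 2
  have q03 := hsum 0 3
  simp only [Fin.sum_univ_four, ha, hb, hc, hp, hq, hr, k10, k20, k30, k21, k31, k32,
    k00, k11, k22, k33, Fin.reduceEq, reduceIte] at q00 q11 q22 q33 q01 q02 q03
  have hr1 : a^2 + b^2 + c^2 = 1 := by linear_combination -q00
  have hr2 : r^2 + q^2 + p^2 = 1 := by linear_combination (q00 - q11 - q22 - q33)/2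
  have hz1 : b*p + c*q = 0 := by linear_combination -q01
  have hz2 : a*p - c*r = 0 := by linear_combination q02
  have hz3 : a*q + b*r = 0 := by linear_combination q03
  -- σ equals the explicit bivector τ
  have hστ : σ = a • wedge (E 0) (E 1) + b • wedge (E 0) (E 2) + c • wedge (E 0) (E 3)
      + p • wedge (E 1) (E 2) + q • wedge (E 1) (E 3) + r • wedge (E 2) (E 3) := by
    set τ : W := a • wedge (E 0) (E 1) + b • wedge (E 0) (E 2) + c • wedge (E 0) (E 3)
      + p • wedge (E 1) (E 2) + q • wedge (E 1) (E 3) + r • wedge (E 2) (E 3) with hτ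
    have base : ∀ i j : Fin 4, ⟪wedge (E i) (E j), σ - τ⟫ = 0 := by
      intro i j
      rw [real_inner_comm, inner_sub_left]
      have hs : ⟪σ, wedge (E i) (E j)⟫ = ⟪J (E i), E j⟫ / 2 := by
        linarith [hσ (E i) (E j)]
      have ht : ⟪τ, wedge (E i) (E j)⟫ = ⟪J (E i), E j⟫ / 2 := by
        rw [hτ]
        simp only [inner_add_left, real_inner_smul_left, hg, hEij]
        fin_cases i <;> fin_cases j <;>
          simp only [F0, F1, F2, F3, Fin.reduceEq, reduceIte, ha, hb, hc, hp, hq, hr,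
            k10, k20, k30, k21, k31, k32, k00, k11, k22, k33] <;>
          ring_nf
      rw [hs, ht]; ring
    have hY : ∀ i : Fin 4, ∀ Y : V, ⟪wedge (E i) Y, σ - τ⟫ = 0 := by
      intro i Y
      have hmem : Y ∈ Submodule.span ℝ (Set.range E) := by rw [hbasis]; trivial
      induction hmem using Submodule.span_induction with
      | mem y hy => obtain ⟨j, rfl⟩ := hy; exact base i j
      | zero => simp
      | add y z _ _ h1 h2 => rw [map_add, inner_add_left, h1, h2]; ring
      | smul t y _ h1 => rw [map_smul, real_inner_smul_left, h1]; ring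
    have hXY : ∀ X Y : V, ⟪wedge X Y, σ - τ⟫ = 0 := by
      intro X Y
      have hmem : X ∈ Submodule.span ℝ (Set.range E) := by rw [hbasis]; trivial
      induction hmem using Submodule.span_induction with
      | mem x hx => obtain ⟨i, rfl⟩ := hx; exact hY i Y
      | zero => simp
      | add x z _ _ h1 h2 =>
          rw [map_add, LinearMap.add_apply, inner_add_left, h1, h2]; ring
      | smul t x _ h1 =>
          rw [map_smul, LinearMap.smul_apply, real_inner_smul_left, h1]; ring
    have := detW _ hXY
    rw [sub_eq_zero] at this
    exact this
  -- norm of σ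
  have hnorm2 : ⟪σ, σ⟫ = 1 := by
    rw [hστ]
    simp only [inner_add_left, inner_add_right, real_inner_smul_left,
      real_inner_smul_right, hg, hEij, Fin.reduceEq, reduceIte]
    linarith only [hr1, hr2]
  have hnorm : ‖σ‖ = 1 := by
    have h := real_inner_self_eq_norm_sq σ
    rw [hnorm2] at h
    have h2 : (‖σ‖ - 1) * (‖σ‖ + 1) = 0 := by linear_combination -h
    rcases mul_eq_zero.mp h2 with h3 | h3
    · linarith only [h3]
    · linarith only [h3, norm_nonneg σ]
  refine ⟨hnorm, ?_⟩
  -- the Pfaffian is ±1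
  have hP2 : (a*r - b*q + c*p)^2 = 1 := by
    linear_combination (r^2 + q^2 + p^2) * hr1 + hr2 - (b*p + c*q) * hz1
      - (a*p - c*r) * hz2 - (a*q + b*r) * hz3
  have hP : a*r - b*q + c*p = 1 ∨ a*r - b*q + c*p = -1 := by
    have h : (a*r - b*q + c*p - 1) * (a*r - b*q + c*p + 1) = 0 := by linear_combination hP2
    rcases mul_eq_zero.mp h with h | h
    · left; linarith
    · right; linarith
  rcases hP with hP1 | hP1
  · -- self-dual case
    left
    have hsq : (a - r)^2 + (b + q)^2 + (c - p)^2 = 0 := by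
      linear_combination hr1 + hr2 - 2 * hP1
    have e1 : r = a := by
      have h1 : (a - r)^2 = 0 := by linarith only [hsq, sq_nonneg (a - r), sq_nonneg (b+q), sq_nonneg (c-p)]
      have := (pow_eq_zero_iff two_ne_zero).mp h1; linarith only [this]
    have e2 : q = -b := by
      have h1 : (b + q)^2 = 0 := by linarith only [hsq, sq_nonneg (b + q), sq_nonneg (a-r), sq_nonneg (c-p)]
      have := (pow_eq_zero_iff two_ne_zero).mp h1; linarith only [this]
    have e3 : p = c := by
      have h1 : (c - p)^2 = 0 := by linarith only [hsq, sq_nonneg (c - p), sq_nonneg (a-r), sq_nonneg (b+q)]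
      have := (pow_eq_zero_iff two_ne_zero).mp h1; linarith only [this]
    have hσs : σ = a • sp 0 + b • sp 1 + c • sp 2 := by
      rw [hστ, hsp0, hsp1, hsp2, hanti (E 1) (E 3), e1, e2, e3]
      module
    rw [hσs]
    exact Submodule.add_mem _
      (Submodule.add_mem _
        (Submodule.smul_mem _ _ (Submodule.subset_span ⟨0, rfl⟩))
        (Submodule.smul_mem _ _ (Submodule.subset_span ⟨1, rfl⟩)))
      (Submodule.smul_mem _ _ (Submodule.subset_span ⟨2, rfl⟩))
  · -- anti-self-dual case
    right
    have hsq : (a + r)^2 + (b - q)^2 + (c + p)^2 = 0 := by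
      linear_combination hr1 + hr2 + 2 * hP1
    have e1 : r = -a := by
      have h1 : (a + r)^2 = 0 := by linarith only [hsq, sq_nonneg (a + r), sq_nonneg (b-q), sq_nonneg (c+p)]
      have := (pow_eq_zero_iff two_ne_zero).mp h1; linarith only [this]
    have e2 : q = b := by
      have h1 : (b - q)^2 = 0 := by linarith only [hsq, sq_nonneg (b - q), sq_nonneg (a+r), sq_nonneg (c+p)]
      have := (pow_eq_zero_iff two_ne_zero).mp h1; linarith only [this]
    have e3 : p = -c := by
      have h1 : (c + p)^2 = 0 := by linarith only [hsq, sq_nonneg (c + p), sq_nonneg (a+r), sq_nonneg (b-q)]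
      have := (pow_eq_zero_iff two_ne_zero).mp h1; linarith only [this]
    have hσs : σ = a • sm 0 + b • sm 1 + c • sm 2 := by
      rw [hστ, hsm0, hsm1, hsm2, hanti (E 1) (E 3), e1, e2, e3]
      module
    rw [hσs]
    exact Submodule.add_mem _
      (Submodule.add_mem _
        (Submodule.smul_mem _ _ (Submodule.subset_span ⟨0, rfl⟩))
        (Submodule.smul_mem _ _ (Submodule.subset_span ⟨1, rfl⟩)))
      (Submodule.smul_mem _ _ (Submodule.subset_span ⟨2, rfl⟩))
end

section
/- Given the Ricci formula ρ_t(E,E) = [s/4 − t(s/12)²]‖X‖² + [1 + (ts/12)²]‖V‖² on the twistor space of an Einstein self-dual 4-manifold with scalar curvature s, the metric h_t is Einstein (ρ_t = λ h_t for a constant λ) if and only if s = 6/t or s = 12/t. -/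
/-- Given the Ricci formula
`ρ_t(E,E) = [s/4 − t(s/12)²]‖X‖² + [1 + (ts/12)²]‖V‖²` and
`h_t(E,E) = ‖X‖² + t‖V‖²`, the metric `h_t` is Einstein iff the algebraic system
`s/4 − ts²/144 = λ` and `1 + t²s²/144 = λt` has a solution `λ`, which for
`s, t > 0` happens exactly when `s = 6/t` or `s = 12/t`. -/
theorem stmt11 (s t : ℝ) (hs : 0 < s) (ht : 0 < t) :
    (∃ lam : ℝ, s/4 - t*s^2/144 = lam ∧ 1 + t^2*s^2/144 = lam * t) ↔
      (s = 6/t ∨ s = 12/t) := by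
  have ht' := ht.ne'
  constructor
  · rintro ⟨lam, h1, h2⟩
    subst h1
    have key : (t*s - 6) * (t*s - 12) = 0 := by nlinarith [sq_nonneg (t*s)]
    rcases mul_eq_zero.1 key with h | h
    · left; field_simp; linarith
    · right; field_simp; linarith
  · rintro (h | h) <;> subst h <;>
      exact ⟨_, rfl, by field_simp; ring⟩
end

section
/- Let s and t > 0 be real numbers, and define on a real vector space T = H ⊕ V (with inner products ‖·‖ on H and V) the quadratic forms q(E) = [s/4 − t(s/12)²]‖X‖² + [1 + (ts/12)²]‖V‖² and h(E) = ‖X‖² + t‖V‖², where E = (X,V). If dim H ≥ 1 and dim V ≥ 1, then q is a constant multiple of h if and only if ts = 6 or ts = 12. -/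
/-- On `T = H ⊕ V` with `dim H ≥ 1`, `dim V ≥ 1`, the quadratic form
`q(E) = [s/4 − t(s/12)²]‖X‖² + [1 + (ts/12)²]‖V‖²` is a constant multiple of
`h(E) = ‖X‖² + t‖V‖²` if and only if `ts = 6` or `ts = 12`. -/
theorem stmt12 (s t : ℝ) (ht : 0 < t)
    {H V : Type*} [NormedAddCommGroup H] [InnerProductSpace ℝ H] [Nontrivial H]
    [NormedAddCommGroup V] [InnerProductSpace ℝ V] [Nontrivial V] :
    (∃ lam : ℝ, ∀ (X : H) (W : V),
        (s/4 - t*(s/12)^2) * ‖X‖^2 + (1 + (t*s/12)^2) * ‖W‖^2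
          = lam * (‖X‖^2 + t * ‖W‖^2)) ↔
      (t*s = 6 ∨ t*s = 12) := by
  constructor
  · rintro ⟨lam, hl⟩
    obtain ⟨x, hx⟩ := exists_ne (0 : H)
    obtain ⟨w, hw⟩ := exists_ne (0 : V)
    have hx' : ‖x‖ ≠ 0 := norm_ne_zero_iff.mpr hx
    have hw' : ‖w‖ ≠ 0 := norm_ne_zero_iff.mpr hw
    have hx2 : (0:ℝ) < ‖x‖^2 := by positivity
    have hw2 : (0:ℝ) < ‖w‖^2 := by positivity
    have h1 := hl x 0
    have h2 := hl 0 w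
    simp only [norm_zero, ne_eq, OfNat.ofNat_ne_zero, not_false_eq_true, zero_pow,
      mul_zero, add_zero, zero_add, mul_add] at h1 h2
    have hA : s/4 - t*(s/12)^2 = lam := by
      have := mul_right_cancel₀ (ne_of_gt hx2) (by linarith [h1] : (s/4 - t*(s/12)^2) * ‖x‖^2 = lam * ‖x‖^2)
      exact this
    have hB : 1 + (t*s/12)^2 = lam * t := by
      have := mul_right_cancel₀ (ne_of_gt hw2)
        (by linarith [h2] : (1 + (t*s/12)^2) * ‖w‖^2 = (lam * t) * ‖w‖^2)
      exact this
    have key : (t*s - 6) * (t*s - 12) = 0 := by nlinarith [hA, hB]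
    rcases mul_eq_zero.mp key with h | h
    · left; linarith
    · right; linarith
  · rintro (h | h) <;>
    · refine ⟨s/4 - t*(s/12)^2, fun X W => ?_⟩
      have hB : 1 + (t*s/12)^2 = (s/4 - t*(s/12)^2) * t := by
        field_simp
        nlinarith [h]
      rw [hB]; ring
end

section
/- Let (M,g) be an Einstein self-dual oriented Riemannian 4-manifold with scalar curvature s, and let ρ*_{t,n} be the *-Ricci tensor of the twistor space (Z, h_t, J_n), n = 1, 2, given by ρ*_{t,n}(E,F) = (1/12)[(1 + (−1)^{n+1})s + (t/24)(1 + (−1)^n)s²]·g(X,Y) + [1 + (−1)^{n+1}·ts/6 + (−1)^n·(ts/12)²]·g(A,B), where X, Y are horizontal parts and A, B vertical parts of E, F. Then (Z, h_t, J_1) is *-Einstein (ρ*_{t,1} = λ h_t, λ constant) if and only if t|s| = 12, and (Z, h_t, J_2) is *-Einstein if and only if ts = 6. -/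
/-- With `t > 0`, `s ∈ ℝ`, the *-Ricci tensor of the twistor space
`(Z, h_t, J_n)` of an Einstein self-dual 4-manifold has, in horizontal/vertical
components `(x, a)`,
for `n = 1`: `ρ*(x,a) = (s/6)·x + [1 + ts/6 − (ts/12)²]·a`,
for `n = 2`: `ρ*(x,a) = (ts²/144)·x + [1 − ts/6 + (ts/12)²]·a`,
while `h_t(x,a) = x + t·a`. Then `(Z, h_t, J_1)` is *-Einstein
(ρ* a constant multiple of h_t) iff `t|s| = 12`, and `(Z, h_t, J_2)` is *-Einstein
iff `ts = 6`. -/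
theorem stmt14 (s t : ℝ) (ht : 0 < t) :
    ((∃ lam : ℝ, ∀ x a : ℝ,
        (s/6) * x + (1 + t*s/6 - (t*s/12)^2) * a = lam * (x + t*a)) ↔
      t * |s| = 12)
    ∧
    ((∃ lam : ℝ, ∀ x a : ℝ,
        (t*s^2/144) * x + (1 - t*s/6 + (t*s/12)^2) * a = lam * (x + t*a)) ↔
      t * s = 6) := by
  have habs : t * |s| = |t * s| := by
    rw [abs_mul, abs_of_pos ht]
  constructor
  · constructor
    · rintro ⟨lam, h⟩
      have h1 := h 1 0
      have h2 := h 0 1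
      simp at h1 h2
      have hsq : (t * s) ^ 2 = 144 := by nlinarith [h1, h2]
      rw [habs]
      nlinarith [sq_abs (t * s), abs_nonneg (t * s)]
    · intro hts
      rw [habs] at hts
      have hsq : (t * s) ^ 2 = 144 := by
        rw [← sq_abs, hts]; norm_num
      refine ⟨s / 6, fun x a => ?_⟩
      have : (1 + t*s/6 - (t*s/12)^2) = s/6 * t := by nlinarith
      rw [this]; ring
  · constructor
    · rintro ⟨lam, h⟩
      have h1 := h 1 0
      have h2 := h 0 1
      simp at h1 h2
      nlinarith [h1, h2, sq_nonneg (t * s - 6)]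
    · intro hts
      refine ⟨t * s^2 / 144, fun x a => ?_⟩
      have : (1 - t*s/6 + (t*s/12)^2) = t * s^2 / 144 * t := by nlinarith
      rw [this]; ring
end
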